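/- There is no natural number k, row-stochastic matrix T ∈ ℝ^{k×k}, and vectors m, μ ∈ ℝ^k such that mᵀ T^{n-1} μ = n for all n ≥ 1. -/

import Mathlib

/-! Powers of a row-stochastic matrix are row-stochastic, and a row-stochastic matrix does not
increase the sup norm of a vector: each entry of `T *ᵥ x` is a convex combination of entries
of `x`. Hence `m ⬝ᵥ T ^ n *ᵥ μ` is bounded uniformly in `n`, so it cannot grow linearly. -/

open Matrix

variable {n : Type*} [Fintype n]

theorem norm_mulVec_le_of_mem_rowStochastic [DecidableEq n] {M : Matrix n n ℝ}
    (hM : M ∈ rowStochastic ℝ n) (x : n → ℝ) : ‖M *ᵥ x‖ ≤ ‖x‖ := by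
  refine (pi_norm_le_iff_of_nonneg (norm_nonneg x)).2 fun i => ?_
  calc ‖(M *ᵥ x) i‖ = |∑ j, M i j * x j| := rfl
    _ ≤ ∑ j, |M i j * x j| := Finset.abs_sum_le_sum_abs _ _
    _ ≤ ∑ j, M i j * ‖x‖ := by
        refine Finset.sum_le_sum fun j _ => ?_
        rw [abs_mul, abs_of_nonneg (nonneg_of_mem_rowStochastic hM)]
        exact mul_le_mul_of_nonneg_left (norm_le_pi_norm x j) (nonneg_of_mem_rowStochastic hM)
    _ = ‖x‖ := by rw [← Finset.sum_mul, sum_row_of_mem_rowStochastic hM, one_mul]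

theorem abs_dotProduct_le_sum_abs_mul_norm (m x : n → ℝ) :
    |m ⬝ᵥ x| ≤ (∑ i, |m i|) * ‖x‖ :=
  calc |m ⬝ᵥ x| ≤ ∑ i, |m i * x i| := Finset.abs_sum_le_sum_abs _ _
    _ ≤ ∑ i, |m i| * ‖x‖ := Finset.sum_le_sum fun i _ => by
        rw [abs_mul]; exact mul_le_mul_of_nonneg_left (norm_le_pi_norm x i) (abs_nonneg _)
    _ = (∑ i, |m i|) * ‖x‖ := (Finset.sum_mul ..).symm

theorem abs_dotProduct_pow_mulVec_le_of_mem_rowStochastic [DecidableEq n] {T : Matrix n n ℝ}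
    (hT : T ∈ rowStochastic ℝ n) (m μ : n → ℝ) (k : ℕ) :
    |m ⬝ᵥ (T ^ k) *ᵥ μ| ≤ (∑ i, |m i|) * ‖μ‖ :=
  (abs_dotProduct_le_sum_abs_mul_norm m _).trans <| mul_le_mul_of_nonneg_left
    (norm_mulVec_le_of_mem_rowStochastic (pow_mem hT k) μ)
    (Finset.sum_nonneg fun _ _ => abs_nonneg _)

open Matrix in
theorem no_stochastic_linear_growth :
    ¬ ∃ (k : ℕ) (T : Matrix (Fin k) (Fin k) ℝ) (m μ : Fin k → ℝ),
      (∀ i j, 0 ≤ T i j) ∧ (∀ i, ∑ j, T i j = 1) ∧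
      ∀ n : ℕ, 1 ≤ n → m ⬝ᵥ (T ^ (n - 1)).mulVec μ = (n : ℝ) := by
  rintro ⟨k, T, m, μ, hnonneg, hrow, hval⟩
  have hT : T ∈ rowStochastic ℝ (Fin k) := mem_rowStochastic_iff_sum.2 ⟨hnonneg, hrow⟩
  obtain ⟨N, hN⟩ := exists_nat_gt ((∑ i, |m i|) * ‖μ‖)
  have hbound := abs_dotProduct_pow_mulVec_le_of_mem_rowStochastic hT m μ N
  rw [← Nat.add_sub_cancel N 1, hval (N + 1) (Nat.le_add_left 1 N)] at hbound
  push_cast at hbound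
  linarith [le_abs_self ((N : ℝ) + 1)]
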